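/- Let λ_1 ≥ λ_2 ≥ ⋯ ≥ λ_d be reals, and suppose there is j* ∈ {1,…,d−1} with ∑_{i=1}^{j*} λ_i ≥ 0 and ∑_{i=1}^{j*+1} λ_i < 0. Let (Λ_j)_{j=0}^d be reals with Λ_0 = 0 and Λ_j ≤ ∑_{i=1}^j λ_i for all j, and let j*_Λ be the largest index j ∈ {0,…,d−1} with Λ_j ≥ 0. Then j*_Λ is well-defined, j*_Λ ≤ j*, and D_s := j*_Λ + Λ_{j*_Λ}/(Λ_{j*_Λ} − Λ_{j*_Λ+1}) satisfies D_s ≤ j* + (∑_{i=1}^{j*} λ_i)/|λ_{j*+1}|. -/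

import Mathlib

/-!
Beyond `j*` the partial sums `S_j = ∑_{i ≤ j} λ_i` stay negative, because the `λ_i` are
nonincreasing and `λ_{j*+1} < 0`; since `Λ_j ≤ S_j`, the last nonnegative `Λ_j` sits at or
before `j*`. With `g(a, b) = a / (a - b)`, which for `a ≥ 0 > b` lies in `[0, 1]` and is
nondecreasing in both arguments, `D_s = j*_Λ + g(Λ_{j*_Λ}, Λ_{j*_Λ+1})`, while the right-hand
side is `j* + g(S_{j*}, S_{j*+1})`. If `j*_Λ = j*`, monotonicity of `g` compares the two; if
`j*_Λ < j*`, then `D_s ≤ j*_Λ + 1 ≤ j*`.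
-/

section SharpnessRatio

variable {a b A B : ℝ}

theorem div_sub_le_one (ha : 0 ≤ a) (hb : b < 0) : a / (a - b) ≤ 1 :=
  (div_le_one (by linarith)).2 (by linarith)

theorem div_sub_nonneg (ha : 0 ≤ a) (hb : b < 0) : 0 ≤ a / (a - b) :=
  div_nonneg ha (by linarith)

theorem div_sub_le_div_sub (ha : 0 ≤ a) (haA : a ≤ A) (hbB : b ≤ B) (hB : B < 0) :
    a / (a - b) ≤ A / (A - B) := by
  rw [div_le_div_iff₀ (by linarith) (by linarith)]
  nlinarith [mul_le_mul haA (neg_le_neg hbB) (by linarith : 0 ≤ -B) (ha.trans haA)]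

end SharpnessRatio

theorem sum_Icc_neg_of_antitoneOn {lam : ℕ → ℝ} {d k : ℕ}
    (hanti : ∀ i j : ℕ, 1 ≤ i → i ≤ j → j ≤ d → lam j ≤ lam i)
    (hlam : lam (k + 1) ≤ 0) (hneg : ∑ i ∈ Finset.Icc 1 (k + 1), lam i < 0) :
    ∀ j, k + 1 ≤ j → j ≤ d → ∑ i ∈ Finset.Icc 1 j, lam i < 0 := by
  intro j hj
  induction j, hj using Nat.le_induction with
  | base => exact fun _ => hneg
  | succ n hn ih =>
    intro hnd
    rw [Finset.sum_Icc_succ_top (by omega)]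
    linarith [ih (by omega), hanti (k + 1) (n + 1) (by omega) (by omega) hnd]

theorem exists_greatest_le_of_zero {P : ℕ → Prop} (n : ℕ) (h0 : P 0) :
    ∃ m, m ≤ n ∧ P m ∧ ∀ j, j ≤ n → P j → j ≤ m := by
  classical
  exact ⟨Nat.findGreatest P n, Nat.findGreatest_le n, Nat.findGreatest_spec (Nat.zero_le n) h0,
    fun _ hj hPj => Nat.le_findGreatest hj hPj⟩

/-- **Comparison of the subadditive-limit sharpness dimension with the
one-step sharpness dimension.**
Let `λ_1 ≥ ⋯ ≥ λ_d` with `∑_{i≤j*} λ_i ≥ 0` and `∑_{i≤j*+1} λ_i < 0` for some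
`j* ∈ {1, …, d−1}`. Let `Λ_0 = 0` and `Λ_j ≤ ∑_{i≤j} λ_i` for all `j ≤ d`, and
let `j*_Λ` be the largest `j ∈ {0, …, d−1}` with `Λ_j ≥ 0`. Then `j*_Λ` is
well-defined, `j*_Λ ≤ j*`, and
`D_s := j*_Λ + Λ_{j*_Λ} / (Λ_{j*_Λ} − Λ_{j*_Λ+1})`
satisfies `D_s ≤ j* + (∑_{i≤j*} λ_i) / |λ_{j*+1}|`. -/
theorem sharpness_dimension_comparison
    (d : ℕ) (lam : ℕ → ℝ)
    (hanti : ∀ i j : ℕ, 1 ≤ i → i ≤ j → j ≤ d → lam j ≤ lam i)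
    (jstar : ℕ) (hjstar1 : 1 ≤ jstar) (hjstard : jstar ≤ d - 1)
    (hsum_nonneg : 0 ≤ ∑ i ∈ Finset.Icc 1 jstar, lam i)
    (hsum_neg : (∑ i ∈ Finset.Icc 1 (jstar + 1), lam i) < 0)
    (Λ : ℕ → ℝ) (hΛ0 : Λ 0 = 0)
    (hΛle : ∀ j : ℕ, j ≤ d → Λ j ≤ ∑ i ∈ Finset.Icc 1 j, lam i) :
    (∃ jΛ : ℕ, jΛ ≤ d - 1 ∧ 0 ≤ Λ jΛ ∧
        (∀ j : ℕ, j ≤ d - 1 → 0 ≤ Λ j → j ≤ jΛ)) ∧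
    (∀ jΛ : ℕ, jΛ ≤ d - 1 → 0 ≤ Λ jΛ →
        (∀ j : ℕ, j ≤ d - 1 → 0 ≤ Λ j → j ≤ jΛ) →
        jΛ ≤ jstar ∧
        (jΛ : ℝ) + Λ jΛ / (Λ jΛ - Λ (jΛ + 1))
          ≤ (jstar : ℝ) +
              (∑ i ∈ Finset.Icc 1 jstar, lam i) / |lam (jstar + 1)|) := by
  refine ⟨exists_greatest_le_of_zero (d - 1) hΛ0.ge, fun jΛ hjd hΛnn hmax => ?_⟩
  have hsplit := Finset.sum_Icc_succ_top (Nat.le_add_left 1 jstar) lam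
  have hlam : lam (jstar + 1) < 0 := by linarith
  have hS_neg := sum_Icc_neg_of_antitoneOn hanti hlam.le hsum_neg
  have hΛ_neg : ∀ j, jstar < j → j ≤ d → Λ j < 0 := fun j hj hjd =>
    (hΛle j hjd).trans_lt (hS_neg j hj hjd)
  have hjle : jΛ ≤ jstar := by
    by_contra! h
    exact (hΛ_neg jΛ h (by omega)).not_ge hΛnn
  have hΛsucc : Λ (jΛ + 1) < 0 := by
    by_cases h : jΛ + 1 ≤ d - 1
    · by_contra! hc
      exact absurd (hmax _ h hc) (by omega)
    · exact hΛ_neg _ (by omega) (by omega)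
  refine ⟨hjle, ?_⟩
  rw [abs_of_neg hlam, show -lam (jstar + 1) = ∑ i ∈ Finset.Icc 1 jstar, lam i
    - ∑ i ∈ Finset.Icc 1 (jstar + 1), lam i by linarith]
  rcases hjle.eq_or_lt with rfl | hlt
  · exact add_le_add_right
      (div_sub_le_div_sub hΛnn (hΛle _ (by omega)) (hΛle _ (by omega)) hsum_neg) _
  · have hcast : (jΛ : ℝ) + 1 ≤ jstar := by exact_mod_cast hlt
    linarith [div_sub_le_one hΛnn hΛsucc, div_sub_nonneg hsum_nonneg hsum_neg]
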